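/- Let d > 1 be a real number, n : ℕ, and r ≥ 0 a real number. If x : Fin (n+1) → ℝ satisfies 0 ≤ x k ≤ 1 for all 0 ≤ k ≤ n and Σ_{k=0}^{n} Q l k · x k ≥ 0 for all 0 ≤ l ≤ n, then x 0 − r · x n ≥ min(((d−1)/(d+1))^n − r, 0). -/

import Mathlib

open Matrix Finset
open scoped BigOperators Kronecker ComplexOrder

noncomputable section

/-- The flip (swap) operator on `ℂ^d ⊗ ℂ^d`. -/
def Flip (d : ℕ) : Matrix (Fin d × Fin d) (Fin d × Fin d) ℂ :=
  Matrix.of fun p q => if p.1 = q.2 ∧ p.2 = q.1 then 1 else 0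

/-- Projection onto the symmetric subspace, `Π_s = (1 + F)/2`. -/
def projSym (d : ℕ) : Matrix (Fin d × Fin d) (Fin d × Fin d) ℂ :=
  (2 : ℂ)⁻¹ • (1 + Flip d)

/-- Projection onto the antisymmetric subspace, `Π_a = (1 - F)/2`. -/
def projAsym (d : ℕ) : Matrix (Fin d × Fin d) (Fin d × Fin d) ℂ :=
  (2 : ℂ)⁻¹ • (1 - Flip d)

/-- The symmetric Werner state `σ_d = (2/(d(d+1))) • Π_s`. -/
def wernerSym (d : ℕ) : Matrix (Fin d × Fin d) (Fin d × Fin d) ℂ :=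
  (2 / ((d : ℂ) * ((d : ℂ) + 1))) • projSym d

/-- The antisymmetric Werner state `α_d = (2/(d(d-1))) • Π_a`. -/
def wernerAsym (d : ℕ) : Matrix (Fin d × Fin d) (Fin d × Fin d) ℂ :=
  (2 / ((d : ℂ) * ((d : ℂ) - 1))) • projAsym d

/-- The POVM element `G_d`: diagonal, with `(i,j),(i,j)` entry `1` iff `i ≠ j`. -/
def Gmat (d : ℕ) : Matrix (Fin d × Fin d) (Fin d × Fin d) ℂ :=
  Matrix.diagonal fun p => if p.1 ≠ p.2 then 1 else 0

/-- `n`-fold tensor power of a matrix on `ℂ^d ⊗ ℂ^d`. -/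
def tpow {d : ℕ} (n : ℕ) (X : Matrix (Fin d × Fin d) (Fin d × Fin d) ℂ) :
    Matrix (Fin n → Fin d × Fin d) (Fin n → Fin d × Fin d) ℂ :=
  Matrix.of fun f g => ∏ m, X (f m) (g m)

/-- The twirled single-copy POVM element `M_d = ((d-1)/(d+1)) • Π_s + Π_a`. -/
def MdMat (d : ℕ) : Matrix (Fin d × Fin d) (Fin d × Fin d) ℂ :=
  (((d : ℂ) - 1) / ((d : ℂ) + 1)) • projSym d + projAsym d

/-- `A_k`: sum over all `k`-element subsets `S` of the copies of the tensor product with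
`Π_a` on copies in `S` and `Π_s` elsewhere. -/
def Amat (d n k : ℕ) : Matrix (Fin n → Fin d × Fin d) (Fin n → Fin d × Fin d) ℂ :=
  ∑ S ∈ Finset.powersetCard k (Finset.univ : Finset (Fin n)),
    Matrix.of fun f g => ∏ m, (if m ∈ S then projAsym d else projSym d) (f m) (g m)

/-- Partial transpose on `ℂ^d ⊗ ℂ^d`. -/
def pt {d : ℕ} (X : Matrix (Fin d × Fin d) (Fin d × Fin d) ℂ) :
    Matrix (Fin d × Fin d) (Fin d × Fin d) ℂ :=
  Matrix.of fun p q => X (p.1, q.2) (q.1, p.2)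

/-- The maximally entangled state `Φ_d`. -/
def Phi (d : ℕ) : Matrix (Fin d × Fin d) (Fin d × Fin d) ℂ :=
  Matrix.of fun p q => if p.1 = p.2 ∧ q.1 = q.2 then ((d : ℂ))⁻¹ else 0

/-- `n`-copy partial transpose. -/
def ptN {d n : ℕ} (Y : Matrix (Fin n → Fin d × Fin d) (Fin n → Fin d × Fin d) ℂ) :
    Matrix (Fin n → Fin d × Fin d) (Fin n → Fin d × Fin d) ℂ :=
  Matrix.of fun f g => Y (fun m => ((f m).1, (g m).2)) (fun m => ((g m).1, (f m).2))

/-- `T_l`: sum over all `l`-element subsets `S` of the copies of the tensor product with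
`Φ_d` on copies in `S` and `1 - Φ_d` elsewhere. -/
def Tmat (d n l : ℕ) : Matrix (Fin n → Fin d × Fin d) (Fin n → Fin d × Fin d) ℂ :=
  ∑ S ∈ Finset.powersetCard l (Finset.univ : Finset (Fin n)),
    Matrix.of fun f g => ∏ m, (if m ∈ S then Phi d else (1 - Phi d)) (f m) (g m)

/-- The matrix `Q` of the linear program: `Q l k = Σ_{j=0}^{min(l,k)}
(n−l choose k−j)(l choose j)(1−d)^j (1+d)^{l−j}`. -/
def Qmat (n : ℕ) (d : ℝ) (l k : ℕ) : ℝ :=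
  ∑ j ∈ Finset.range (min l k + 1),
    ((n - l).choose (k - j) : ℝ) * (l.choose j : ℝ) * (1 - d) ^ j * (1 + d) ^ (l - j)

/-- A PPT POVM element on the `n`-copy space: `E`, `1 - E`, `E^Γ`, `(1-E)^Γ` all PSD. -/
def IsPPTPovmElem {d n : ℕ}
    (E : Matrix (Fin n → Fin d × Fin d) (Fin n → Fin d × Fin d) ℂ) : Prop :=
  E.PosSemidef ∧ (1 - E).PosSemidef ∧ (ptN E).PosSemidef ∧ (ptN (1 - E)).PosSemidef

/-- Error probability for discriminating `σ_d^{⊗n}` (prior `p`) from `α_d^{⊗n}`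
(prior `1-p`) with the two-outcome POVM `{E, 1 - E}`. -/
def errProb (d n : ℕ) (p : ℝ)
    (E : Matrix (Fin n → Fin d × Fin d) (Fin n → Fin d × Fin d) ℂ) : ℝ :=
  ((p : ℂ) * (E * tpow n (wernerSym d)).trace
    + (1 - (p : ℂ)) * ((1 - E) * tpow n (wernerAsym d)).trace).re

/-- Separability of a bipartite matrix. -/
def IsSep {I J : Type*} [Fintype I] [Fintype J]
    (W : Matrix (I × J) (I × J) ℂ) : Prop :=
  ∃ (m : ℕ) (A : Fin m → Matrix I I ℂ) (B : Fin m → Matrix J J ℂ),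
    (∀ i, (A i).PosSemidef) ∧ (∀ i, (B i).PosSemidef) ∧ W = ∑ i, A i ⊗ₖ B i

/-- Trace norm `‖X‖₁ = Tr √(Xᴴ X)`. -/
def traceNorm {ι : Type*} [Fintype ι] [DecidableEq ι] (X : Matrix ι ι ℂ) : ℝ :=
  (((Matrix.posSemidef_conjTranspose_mul_self X).1.eigenvectorUnitary : Matrix ι ι ℂ) *
    Matrix.diagonal (((↑) : ℝ → ℂ) ∘ Real.sqrt ∘ (Matrix.posSemidef_conjTranspose_mul_self X).1.eigenvalues) *
    (star (Matrix.posSemidef_conjTranspose_mul_self X).1.eigenvectorUnitary : Matrix ι ι ℂ)).trace.re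

/-- Frobenius (Hilbert–Schmidt) norm `‖X‖₂ = √(Tr (Xᴴ X))`. -/
def frobNorm {ι : Type*} [Fintype ι] (X : Matrix ι ι ℂ) : ℝ :=
  Real.sqrt ((Xᴴ * X).trace.re)

/-!
Row `l` of `Qmat n d` is the coefficient list of `(1 + X)^(n-l) (1 + d + (1 - d) X)^l`.
With `u = 1 + X`, `v = 1 + d + (1 - d) X` one has `v + (d - 1) u = 2d` and
`(1 + d) u - v = 2d X`, so by the binomial theorem the rows combine, with the weights
`C(n,l) ((1+d)(d-1))^(n-l) ((1+d)^l - (1-d)^l) ≥ 0`, into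
`(2d)^n ((1+d)^n - (d-1)^n X^n)`. Pairing with a feasible `x` gives the dual bound
`(d-1)^n x_n ≤ (d+1)^n x_0`, and `0 ≤ x_n ≤ 1` turns this into the claim.
-/

open Polynomial

theorem Polynomial.coeff_C_add_C_mul_X_pow {R : Type*} [CommSemiring R] (a b : R) (l j : ℕ) :
    ((C a + C b * X) ^ l).coeff j = l.choose j * b ^ j * a ^ (l - j) := by
  have hterm : ∀ i, (C b * X) ^ i * C a ^ (l - i) * (l.choose i : R[X]) =
      C (l.choose i * b ^ i * a ^ (l - i)) * X ^ i := fun i => by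
    simp only [map_mul, map_pow, map_natCast]; ring
  simp only [add_comm (C a), add_pow, hterm, finsetSum_coeff, coeff_C_mul_X_pow,
    Finset.sum_ite_eq, Finset.mem_range]
  split_ifs with hj
  · rfl
  · simp [Nat.choose_eq_zero_of_lt (by omega : l < j)]

theorem sum_choose_mul_pow_sub_neg_pow {A : Type*} [CommRing A] (p q u v : A) (n : ℕ) :
    ∑ l ∈ Finset.range (n + 1),
        n.choose l * (p * q) ^ (n - l) * (p ^ l - (-q) ^ l) * (u ^ (n - l) * v ^ l) =
      p ^ n * (v + q * u) ^ n - q ^ n * (-v + p * u) ^ n := by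
  rw [add_pow, add_pow, Finset.mul_sum, Finset.mul_sum, ← Finset.sum_sub_distrib]
  refine Finset.sum_congr rfl fun l hl => ?_
  obtain ⟨m, rfl⟩ : ∃ m, n = l + m := ⟨n - l, by simp at hl; omega⟩
  rw [add_tsub_cancel_left]
  ring

def qPoly (n : ℕ) (d : ℝ) (l : ℕ) : ℝ[X] :=
  (1 + X) ^ (n - l) * (C (1 + d) + C (1 - d) * X) ^ l

theorem Qmat_eq_coeff_qPoly (n : ℕ) (d : ℝ) (l k : ℕ) :
    Qmat n d l k = (qPoly n d l).coeff k := by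
  rw [qPoly, mul_comm, coeff_mul, Finset.Nat.sum_antidiagonal_eq_sum_range_succ_mk, Qmat]
  refine Finset.sum_subset
    (Finset.range_subset_range.mpr (by omega : min l k + 1 ≤ k + 1)) ?_ |>.trans ?_
  · intro j hjk hjl
    simp only [Finset.mem_range] at hjk hjl
    simp [Nat.choose_eq_zero_of_lt (by omega : l < j)]
  · refine Finset.sum_congr rfl fun j _ => ?_
    rw [coeff_C_add_C_mul_X_pow, coeff_one_add_X_pow]
    ring

def qWeight (n : ℕ) (d : ℝ) (l : ℕ) : ℝ :=
  n.choose l * ((1 + d) * (d - 1)) ^ (n - l) * ((1 + d) ^ l - (1 - d) ^ l)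

theorem qWeight_nonneg {d : ℝ} (hd : 1 ≤ d) (n l : ℕ) : 0 ≤ qWeight n d l := by
  have hpow : (1 - d) ^ l ≤ (1 + d) ^ l := calc
    (1 - d) ^ l ≤ |1 - d| ^ l := by rw [← abs_pow]; exact le_abs_self _
    _ ≤ (1 + d) ^ l :=
      pow_le_pow_left₀ (abs_nonneg _) (abs_le.mpr ⟨by linarith, by linarith⟩) l
  have : 0 ≤ (1 + d) * (d - 1) := mul_nonneg (by linarith) (by linarith)
  unfold qWeight
  positivity

theorem sum_qWeight_smul_qPoly (n : ℕ) (d : ℝ) :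
    ∑ l ∈ Finset.range (n + 1), qWeight n d l • qPoly n d l =
      C ((2 * d) ^ n) * (C ((1 + d) ^ n) - C ((d - 1) ^ n) * X ^ n) := by
  simp only [qWeight, qPoly, smul_eq_C_mul]
  rw [show 1 - d = -(d - 1) by ring, show 2 * d = (1 + d) + (d - 1) by ring]
  generalize 1 + d = a, d - 1 = b
  have hsym : C a + C (-b) * X + C b * (1 + X) = C (a + b) := by
    simp only [map_add, map_neg]; ring
  have hasym : -(C a + C (-b) * X) + C a * (1 + X) = C (a + b) * X := by
    simp only [map_add, map_neg]; ring
  have key := sum_choose_mul_pow_sub_neg_pow (C a) (C b) (1 + X) (C a + C (-b) * X) n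
  rw [hsym, hasym] at key
  simp only [map_mul, map_pow, map_sub, map_natCast, map_neg] at key ⊢
  rw [key]
  ring

def coeffPairing (n : ℕ) (x : Fin (n + 1) → ℝ) : ℝ[X] →ₗ[ℝ] ℝ :=
  ∑ k, x k • lcoeff ℝ k

theorem coeffPairing_apply (n : ℕ) (x : Fin (n + 1) → ℝ) (p : ℝ[X]) :
    coeffPairing n x p = ∑ k : Fin (n + 1), p.coeff k * x k := by
  simp [coeffPairing, mul_comm]

theorem coeffPairing_C_sub_C_mul_X_pow (n : ℕ) (x : Fin (n + 1) → ℝ) (a b : ℝ) :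
    coeffPairing n x (C a - C b * X ^ n) = a * x 0 - b * x (Fin.last n) := by
  have hlast : ∀ k : Fin (n + 1), (k : ℕ) = n ↔ k = Fin.last n := fun k => by
    rw [Fin.ext_iff, Fin.val_last]
  simp only [coeffPairing_apply, coeff_sub, coeff_C, coeff_C_mul_X_pow, sub_mul, ite_mul,
    zero_mul, Finset.sum_sub_distrib, Fin.val_eq_zero_iff, hlast, Finset.sum_ite_eq',
    Finset.mem_univ, if_true]

theorem pow_mul_last_le_first_of_Qmat_nonneg {d : ℝ} (hd : 1 < d) {n : ℕ}
    {x : Fin (n + 1) → ℝ}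
    (hQ : ∀ l : Fin (n + 1), 0 ≤ ∑ k : Fin (n + 1), Qmat n d l k * x k) :
    ((d - 1) / (d + 1)) ^ n * x (Fin.last n) ≤ x 0 := by
  have hrow : ∀ l ∈ Finset.range (n + 1), 0 ≤ qWeight n d l * coeffPairing n x (qPoly n d l) :=
    fun l hl => mul_nonneg (qWeight_nonneg hd.le n l) <| by
      simpa [coeffPairing_apply, Qmat_eq_coeff_qPoly] using hQ ⟨l, Finset.mem_range.mp hl⟩
  have hdual : 0 ≤ (2 * d) ^ n * ((1 + d) ^ n * x 0 - (d - 1) ^ n * x (Fin.last n)) := calc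
    0 ≤ ∑ l ∈ Finset.range (n + 1), qWeight n d l * coeffPairing n x (qPoly n d l) :=
      Finset.sum_nonneg hrow
    _ = coeffPairing n x (C ((2 * d) ^ n) * (C ((1 + d) ^ n) - C ((d - 1) ^ n) * X ^ n)) := by
      rw [← sum_qWeight_smul_qPoly, map_sum]
      simp only [map_smul, smul_eq_mul]
    _ = _ := by
      rw [mul_sub, ← C_mul, ← mul_assoc, ← C_mul, coeffPairing_C_sub_C_mul_X_pow]
      ring
  have h := (mul_nonneg_iff_of_pos_left (by positivity)).mp hdual
  rw [div_pow, div_mul_eq_mul_div, div_le_iff₀ (by positivity), add_comm d]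
  linarith

theorem min_sub_zero_le_sub_mul {a s r y : ℝ} (hy0 : 0 ≤ y) (hy1 : y ≤ 1) (h : s * y ≤ a) :
    min (s - r) 0 ≤ a - r * y := by
  rcases le_total (s - r) 0 with hsr | hsr
  · rw [min_eq_left hsr]; nlinarith
  · rw [min_eq_right hsr]; nlinarith

theorem lp_feasible_bound_general (d : ℝ) (hd : 1 < d) (n : ℕ) (r : ℝ)
    (x : Fin (n + 1) → ℝ)
    (hx0 : ∀ k, 0 ≤ x k) (hx1 : ∀ k, x k ≤ 1)
    (hQ : ∀ l : Fin (n + 1), 0 ≤ ∑ k : Fin (n + 1), Qmat n d (l : ℕ) (k : ℕ) * x k) :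
    x 0 - r * x (Fin.last n) ≥ min (((d - 1) / (d + 1)) ^ n - r) 0 :=
  min_sub_zero_le_sub_mul (hx0 _) (hx1 _) (pow_mul_last_le_first_of_Qmat_nonneg hd hQ)

/-- LP feasibility bound: any feasible `x` satisfies
`x 0 − r x n ≥ min(((d−1)/(d+1))^n − r, 0)`. -/
theorem lp_feasible_bound (d : ℝ) (hd : 1 < d) (n : ℕ) (r : ℝ) (hr : 0 ≤ r)
    (x : Fin (n + 1) → ℝ)
    (hx0 : ∀ k, 0 ≤ x k) (hx1 : ∀ k, x k ≤ 1)
    (hQ : ∀ l : Fin (n + 1), 0 ≤ ∑ k : Fin (n + 1), Qmat n d (l : ℕ) (k : ℕ) * x k) :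
    x 0 - r * x (Fin.last n) ≥ min (((d - 1) / (d + 1)) ^ n - r) 0 :=
  lp_feasible_bound_general d hd n r x hx0 hx1 hQ
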